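/- Let V be a finite-dimensional complex vector space and g a finite-order linear automorphism of V. If for some k > 0 the induced action of g on the k-th symmetric power Sym^k(V) is the identity, then g acts on V as multiplication by a scalar (a root of unity). -/
import Mathlib


/- STATEMENT 0: Let V be a finite-dimensional complex vector space and g a finite-order
linear automorphism of V. If for some k > 0 the induced action of g on Sym^k(V) is the
identity, then g acts on V as multiplication by a scalar (a root of unity).

Since this version of Mathlib has no symmetric powers, the triviality of the induced
action on Sym^k(V) is encoded (equivalently, over ℂ) by the condition that the induced
map on the k-th tensor power fixes every symmetric tensor v ⊗ ⋯ ⊗ v; these tensors span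
the symmetric tensors in characteristic zero, and Sym^k(V) is their span. -/
theorem stmt_0 {V : Type*} [AddCommGroup V] [Module ℂ V] [FiniteDimensional ℂ V]
    (g : V ≃ₗ[ℂ] V) (n : ℕ) (hn : 1 ≤ n) (hord : g ^ n = LinearEquiv.refl ℂ V)
    (k : ℕ) (hk : 0 < k)
    (hsym : ∀ v : V,
      PiTensorProduct.map (fun _ : Fin k => (g : V →ₗ[ℂ] V))
        (PiTensorProduct.tprod ℂ (fun _ : Fin k => v)) =
      PiTensorProduct.tprod ℂ (fun _ : Fin k => v)) :
    ∃ lam : ℂ, (∃ m : ℕ, 1 ≤ m ∧ lam ^ m = 1) ∧ ∀ v : V, g v = lam • v := by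
  -- Step 1: every vector is an eigenvector.
  have key : ∀ v : V, ∃ c : ℂ, g v = c • v := by
    intro v
    by_cases hv : v = 0
    · exact ⟨1, by simp [hv]⟩
    -- show g v ∈ span {v}
    have hmem : g v ∈ Submodule.span ℂ {v} := by
      by_contra hgv
      obtain ⟨f, hf1, hf2⟩ :=
        (Submodule.span ℂ {v}).exists_dual_map_eq_bot_of_notMem hgv inferInstance
      have hfv : f v = 0 := by
        have : f v ∈ (Submodule.span ℂ {v}).map f :=
          Submodule.mem_map_of_mem (Submodule.mem_span_singleton_self v)
        rw [hf2] at this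
        simpa using this
      -- the functional on the tensor power
      set Λ : PiTensorProduct ℂ (fun _ : Fin k => V) →ₗ[ℂ] ℂ :=
        PiTensorProduct.lift
          ((MultilinearMap.mkPiAlgebra ℂ (Fin k) ℂ).compLinearMap fun _ => f)
      have hΛ : ∀ w : V, Λ (PiTensorProduct.tprod ℂ (fun _ : Fin k => w)) = (f w) ^ k := by
        intro w
        simp [Λ, PiTensorProduct.lift.tprod, MultilinearMap.compLinearMap_apply,
          MultilinearMap.mkPiAlgebra_apply]
      have heq : PiTensorProduct.tprod ℂ (fun _ : Fin k => g v) =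
          PiTensorProduct.tprod ℂ (fun _ : Fin k => v) := by
        have := hsym v
        rwa [PiTensorProduct.map_tprod] at this
      have hpow : (f (g v)) ^ k = (f v) ^ k := by
        rw [← hΛ, ← hΛ, heq]
      rw [hfv, zero_pow hk.ne'] at hpow
      exact hf1 (pow_eq_zero_iff hk.ne' |>.mp hpow)
    rcases Submodule.mem_span_singleton.mp hmem with ⟨c, hc⟩
    exact ⟨c, hc.symm⟩
  -- Step 2: the eigenvalue is the same for all vectors.
  by_cases htriv : ∀ v : V, v = 0
  · exact ⟨1, ⟨1, le_refl 1, one_pow 1⟩, fun v => by rw [htriv v]; simp⟩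
  push_neg at htriv
  obtain ⟨v0, hv0⟩ := htriv
  obtain ⟨lam, hlam⟩ := key v0
  have hall : ∀ v : V, g v = lam • v := by
    intro v
    by_cases hv : v = 0
    · simp [hv]
    obtain ⟨c, hc⟩ := key v
    by_cases hspan : v ∈ Submodule.span ℂ {v0}
    · rcases Submodule.mem_span_singleton.mp hspan with ⟨a, ha⟩
      rw [← ha, map_smul, hlam, smul_comm]
    · obtain ⟨d, hd⟩ := key (v0 + v)
      have h1 : lam • v0 + c • v = d • v0 + d • v := by
        rw [← hlam, ← hc, ← map_add, hd, smul_add]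
      have hdc : d = c := by
        by_contra hne
        apply hspan
        have hne' : d - c ≠ 0 := sub_ne_zero.mpr hne
        have h2 : (d - c) • v = (lam - d) • v0 := by
          linear_combination (norm := module) -h1
        have : v = ((d - c)⁻¹ * (lam - d)) • v0 := by
          calc v = (d - c)⁻¹ • ((d - c) • v) := by
                rw [smul_smul, inv_mul_cancel₀ hne', one_smul]
            _ = _ := by rw [h2, smul_smul]
        rw [this]
        exact Submodule.smul_mem _ _ (Submodule.mem_span_singleton_self v0)
      have hclam : c = lam := by
        have h3 : (lam - c) • v0 = 0 := by
          rw [hdc] at h1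
          linear_combination (norm := module) h1
        rcases smul_eq_zero.mp h3 with h | h
        · exact (sub_eq_zero.mp h).symm
        · exact absurd h hv0
      rw [hc, hclam]
  -- Step 3: lam is a root of unity.
  refine ⟨lam, ⟨n, hn, ?_⟩, hall⟩
  have hiter : ∀ j : ℕ, (g ^ j) v0 = lam ^ j • v0 := by
    intro j
    induction j with
    | zero => simp
    | succ j ih =>
      rw [LinearEquiv.pow_apply, Function.iterate_succ_apply', ← LinearEquiv.pow_apply, ih,
        map_smul, hall, pow_succ, smul_smul, mul_comm]
  have := hiter n
  rw [hord] at this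
  simp only [LinearEquiv.refl_apply] at this
  have h4 : (lam ^ n - 1) • v0 = 0 := by
    rw [sub_smul, one_smul, ← this, sub_self]
  rcases smul_eq_zero.mp h4 with h | h
  · exact sub_eq_zero.mp h
  · exact absurd h hv0
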